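/- Define φ_1 : B_n → B_n as follows: for π ∈ B_n, let Neg(π) = {i : π(i) < 0} listed as j_1,...,j_m so that π(j_1) < ... < π(j_m), and let α(j_k) = j_{m+1-k}; set φ_1(π)(i) = π(i) if π(i) > 0 and φ_1(π)(i) = π(α(i)) if π(i) < 0. Then φ_1 is an involution on B_n. -/

import Mathlib

/-- A signed permutation in the hyperoctahedral group `B_n`, encoded by its
values on positions `1,…,n` (with `π 0 = 0` and `π i = 0` for `i > n`). -/
def IsSignedPerm (n : ℕ) (π : ℕ → ℤ) : Prop :=
  π 0 = 0 ∧ (∀ i, n < i → π i = 0) ∧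
  (∀ i ∈ Finset.Icc 1 n, 1 ≤ (π i).natAbs ∧ (π i).natAbs ≤ n) ∧
  (∀ i ∈ Finset.Icc 1 n, ∀ j ∈ Finset.Icc 1 n, (π i).natAbs = (π j).natAbs → i = j)

/-- The type B descent set `Des(π) = {0 ≤ i ≤ n-1 : π(i) > π(i+1)}` (with `π 0 = 0`). -/
def DesSet (n : ℕ) (π : ℕ → ℤ) : Finset ℕ :=
  (Finset.range n).filter (fun i => π (i + 1) < π i)

/-- The map `φ₁`: positive entries are fixed, and the negative values are
redistributed among the negative positions in reverse order (the `k`-th smallest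
negative value is replaced by the `k`-th largest). -/
def phi1 (n : ℕ) (π : ℕ → ℤ) : ℕ → ℤ := fun i =>
  if π i < 0 then
    let L := (((Finset.Icc 1 n).filter (fun j => π j < 0)).image π).sort (· ≤ ·)
    L.getD (L.length - 1 - L.idxOf (π i)) 0
  else π i

namespace Phi1Aux

/-- The set of negative values of `π`. -/
def negVals (n : ℕ) (π : ℕ → ℤ) : Finset ℤ :=
  ((Finset.Icc 1 n).filter (fun j => π j < 0)).image π

def L (n : ℕ) (π : ℕ → ℤ) : List ℤ := (negVals n π).sort (· ≤ ·)

/-- The value-level reversal map. -/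
def g (n : ℕ) (π : ℕ → ℤ) (v : ℤ) : ℤ :=
  (L n π).getD ((L n π).length - 1 - (L n π).idxOf v) 0

lemma phi1_eq (n : ℕ) (π : ℕ → ℤ) (i : ℕ) :
    phi1 n π i = if π i < 0 then g n π (π i) else π i := rfl

lemma mem_negVals {n : ℕ} {π : ℕ → ℤ} {v : ℤ} :
    v ∈ negVals n π ↔ ∃ j ∈ Finset.Icc 1 n, π j < 0 ∧ π j = v := by
  simp [negVals, Finset.mem_image, Finset.mem_filter]
  tauto

lemma negVals_neg {n : ℕ} {π : ℕ → ℤ} {v : ℤ} (hv : v ∈ negVals n π) : v < 0 := by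
  obtain ⟨j, _, hj, hje⟩ := mem_negVals.mp hv
  omega

lemma mem_L {n : ℕ} {π : ℕ → ℤ} {v : ℤ} : v ∈ L n π ↔ v ∈ negVals n π :=
  Finset.mem_sort _

lemma g_mem {n : ℕ} {π : ℕ → ℤ} {v : ℤ} (hv : v ∈ negVals n π) :
    g n π v ∈ negVals n π := by
  have hvL : v ∈ L n π := mem_L.mpr hv
  have hidx : (L n π).idxOf v < (L n π).length := List.idxOf_lt_length_iff.mpr hvL
  have hlt : (L n π).length - 1 - (L n π).idxOf v < (L n π).length := by omega
  rw [g, List.getD_eq_getElem _ _ hlt]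
  exact mem_L.mp (List.getElem_mem hlt)

lemma g_g {n : ℕ} {π : ℕ → ℤ} {v : ℤ} (hv : v ∈ negVals n π) :
    g n π (g n π v) = v := by
  have hnd : (L n π).Nodup := Finset.sort_nodup _ _
  have hvL : v ∈ L n π := mem_L.mpr hv
  have hidx : (L n π).idxOf v < (L n π).length := List.idxOf_lt_length_iff.mpr hvL
  have hlt : (L n π).length - 1 - (L n π).idxOf v < (L n π).length := by omega
  have h1 : g n π v = (L n π)[(L n π).length - 1 - (L n π).idxOf v] :=
    List.getD_eq_getElem _ _ hlt
  have h2 : (L n π).idxOf (g n π v) = (L n π).length - 1 - (L n π).idxOf v := by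
    rw [h1]; exact List.Nodup.idxOf_getElem hnd _ hlt
  have h3 : (L n π).length - 1 - ((L n π).length - 1 - (L n π).idxOf v)
      = (L n π).idxOf v := by omega
  rw [g, h2, h3, List.getD_eq_getElem _ _ hidx, List.getElem_idxOf hidx]

lemma pi_inj {n : ℕ} {π : ℕ → ℤ} (hπ : IsSignedPerm n π) {i j : ℕ}
    (hi : i ∈ Finset.Icc 1 n) (hj : j ∈ Finset.Icc 1 n) (h : π i = π j) : i = j :=
  hπ.2.2.2 i hi j hj (by rw [h])

lemma isSignedPerm_phi1 {n : ℕ} {π : ℕ → ℤ} (hπ : IsSignedPerm n π) :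
    IsSignedPerm n (phi1 n π) := by
  obtain ⟨h0, hgt, hbd, hinj⟩ := hπ
  -- negative case value description
  have key : ∀ i ∈ Finset.Icc 1 n, π i < 0 →
      ∃ j ∈ Finset.Icc 1 n, π j < 0 ∧ π j = phi1 n π i := by
    intro i hi hneg
    have : π i ∈ negVals n π := mem_negVals.mpr ⟨i, hi, hneg, rfl⟩
    have := g_mem this
    rw [phi1_eq, if_pos hneg]
    exact mem_negVals.mp this
  refine ⟨?_, ?_, ?_, ?_⟩
  · rw [phi1_eq, h0]; simp
  · intro i hi; rw [phi1_eq, hgt i hi]; simp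
  · intro i hi
    rw [phi1_eq]
    by_cases hneg : π i < 0
    · rw [if_pos hneg]
      obtain ⟨j, hj, _, hje⟩ := key i hi hneg
      rw [phi1_eq, if_pos hneg] at hje
      rw [← hje]; exact hbd j hj
    · rw [if_neg hneg]; exact hbd i hi
  · intro i hi j hj h
    rw [phi1_eq, phi1_eq] at h
    by_cases hni : π i < 0 <;> by_cases hnj : π j < 0
    · rw [if_pos hni, if_pos hnj] at h
      have hgi : g n π (π i) ∈ negVals n π :=
        g_mem (mem_negVals.mpr ⟨i, hi, hni, rfl⟩)
      have hgj : g n π (π j) ∈ negVals n π :=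
        g_mem (mem_negVals.mpr ⟨j, hj, hnj, rfl⟩)
      have : g n π (π i) = g n π (π j) := by
        have h1 := negVals_neg hgi
        have h2 := negVals_neg hgj
        omega
      have : g n π (g n π (π i)) = g n π (g n π (π j)) := by rw [this]
      rw [g_g (mem_negVals.mpr ⟨i, hi, hni, rfl⟩),
        g_g (mem_negVals.mpr ⟨j, hj, hnj, rfl⟩)] at this
      exact hinj i hi j hj (by rw [this])
    · rw [if_pos hni, if_neg hnj] at h
      obtain ⟨k, hk, hkneg, hke⟩ := key i hi hni
      rw [phi1_eq, if_pos hni] at hke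
      have hkj : k = j := hinj k hk j hj (by rw [hke, h])
      rw [hkj] at hkneg; omega
    · rw [if_neg hni, if_pos hnj] at h
      obtain ⟨k, hk, hkneg, hke⟩ := key j hj hnj
      rw [phi1_eq, if_pos hnj] at hke
      have hki : k = i := hinj k hk i hi (by rw [hke, ← h])
      rw [hki] at hkneg; omega
    · rw [if_neg hni, if_neg hnj] at h
      exact hinj i hi j hj h

lemma phi1_neg_iff {n : ℕ} {π : ℕ → ℤ} (hπ : IsSignedPerm n π) (i : ℕ)
    (hi : i ∈ Finset.Icc 1 n) : phi1 n π i < 0 ↔ π i < 0 := by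
  rw [phi1_eq]
  by_cases hneg : π i < 0
  · rw [if_pos hneg]
    have : g n π (π i) ∈ negVals n π :=
      g_mem (mem_negVals.mpr ⟨i, hi, hneg, rfl⟩)
    simpa [hneg] using negVals_neg this
  · rw [if_neg hneg]

lemma negVals_phi1 {n : ℕ} {π : ℕ → ℤ} (hπ : IsSignedPerm n π) :
    negVals n (phi1 n π) = negVals n π := by
  ext v
  constructor
  · intro hv
    obtain ⟨j, hj, hjneg, hje⟩ := mem_negVals.mp hv
    have hpj : π j < 0 := (phi1_neg_iff hπ j hj).mp hjneg
    rw [phi1_eq, if_pos hpj] at hje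
    rw [← hje]
    exact g_mem (mem_negVals.mpr ⟨j, hj, hpj, rfl⟩)
  · intro hv
    obtain ⟨j, hj, hjneg, hje⟩ := mem_negVals.mp (g_mem hv)
    refine mem_negVals.mpr ⟨j, hj, ?_, ?_⟩
    · rw [phi1_neg_iff hπ j hj]; exact hjneg
    · rw [phi1_eq, if_pos hjneg, hje, g_g hv]

end Phi1Aux

open Phi1Aux in
/-- `φ₁` is an involution on `B_n`. -/
theorem phi1_involutive (n : ℕ) (π : ℕ → ℤ) (hπ : IsSignedPerm n π) :
    IsSignedPerm n (phi1 n π) ∧ phi1 n (phi1 n π) = π := by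
  refine ⟨isSignedPerm_phi1 hπ, ?_⟩
  funext i
  by_cases hi : i ∈ Finset.Icc 1 n
  · by_cases hneg : π i < 0
    · have hmem : π i ∈ negVals n π := mem_negVals.mpr ⟨i, hi, hneg, rfl⟩
      have h1 : phi1 n π i = g n π (π i) := by rw [phi1_eq, if_pos hneg]
      have h2 : phi1 n π i < 0 := (phi1_neg_iff hπ i hi).mpr hneg
      have hg : g n (phi1 n π) = g n π := by
        unfold g L
        rw [negVals_phi1 hπ]
      rw [phi1_eq, if_pos h2, hg, h1]
      exact g_g hmem
    · have h1 : phi1 n π i = π i := by rw [phi1_eq, if_neg hneg]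
      rw [phi1_eq, h1, if_neg hneg]
  · simp only [Finset.mem_Icc, not_and, not_le] at hi
    have hz : π i = 0 := by
      rcases Nat.lt_or_ge i 1 with h | h
      · interval_cases i; exact hπ.1
      · exact hπ.2.1 i (hi h)
    have h1 : phi1 n π i = 0 := by rw [phi1_eq, hz]; simp
    rw [phi1_eq, h1, hz]; simp
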